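/- The group ⟨a, b | (ab)^2 = (ba)^2⟩ contains a free subgroup of rank 2. -/

import Mathlib

open Equiv Pointwise

private abbrev V := {v : ℝ × ℝ // v ≠ 0}

private def tE : Equiv.Perm (ℝ × ℝ) :=
  ⟨fun v => (v.1, v.2 + 3 * v.1), fun v => (v.1, v.2 - 3 * v.1),
   fun v => by simp, fun v => by simp⟩

private def sE : Equiv.Perm (ℝ × ℝ) :=
  ⟨fun v => (v.1 + 3 * v.2, v.2), fun v => (v.1 - 3 * v.2, v.2),
   fun v => by simp, fun v => by simp⟩

private lemma tE_ne (v : ℝ × ℝ) : v ≠ 0 ↔ tE v ≠ 0 := by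
  apply not_congr
  simp only [tE, Prod.ext_iff, Prod.fst_zero, Prod.snd_zero, Equiv.coe_fn_mk]
  constructor <;> rintro ⟨h1, h2⟩ <;> exact ⟨h1, by linarith⟩

private lemma sE_ne (v : ℝ × ℝ) : v ≠ 0 ↔ sE v ≠ 0 := by
  apply not_congr
  simp only [sE, Prod.ext_iff, Prod.fst_zero, Prod.snd_zero, Equiv.coe_fn_mk]
  constructor <;> rintro ⟨h1, h2⟩ <;> exact ⟨by linarith, h2⟩

private lemma jE_ne (v : ℝ × ℝ) : v ≠ 0 ↔ (Equiv.prodComm ℝ ℝ) v ≠ 0 := by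
  apply not_congr
  simp only [Prod.ext_iff, Prod.fst_zero, Prod.snd_zero, Equiv.prodComm_apply,
    Prod.fst_swap, Prod.snd_swap]
  tauto

private def T : Equiv.Perm V := tE.subtypePerm (fun v => (tE_ne v).symm)
private def S : Equiv.Perm V := sE.subtypePerm (fun v => (sE_ne v).symm)
private def J : Equiv.Perm V := Equiv.Perm.subtypePerm (Equiv.prodComm ℝ ℝ) (fun v => (jE_ne v).symm)

private lemma JJ : J * J = 1 := by
  apply Equiv.ext
  intro v
  apply Subtype.ext
  simp [J, Equiv.Perm.mul_apply, Equiv.Perm.subtypePerm_apply, -Equiv.Perm.subtypePerm_mul]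

private lemma Jinv : J⁻¹ = J := by
  rw [inv_eq_iff_mul_eq_one, JJ]

private lemma JTJ : J * T * J⁻¹ = S := by
  rw [Jinv]
  apply Equiv.ext
  intro v
  apply Subtype.ext
  simp [J, T, S, Equiv.Perm.mul_apply, Equiv.Perm.subtypePerm_apply, tE, sE, -Equiv.Perm.subtypePerm_mul]

private noncomputable def A : Equiv.Perm V := J * T⁻¹

private lemma hAT : A * T = J := by
  simp [A, mul_assoc]

private abbrev rels : Set (FreeGroup Bool) :=
  {(FreeGroup.of true * FreeGroup.of false) ^ 2 *
      ((FreeGroup.of false * FreeGroup.of true) ^ 2)⁻¹}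

private noncomputable def fgen : Bool → Equiv.Perm V := fun b => if b then A else T

private lemma hrel : ∀ r ∈ rels, (FreeGroup.lift fgen) r = 1 := by
  rintro r hr
  rw [Set.mem_singleton_iff] at hr
  subst hr
  simp only [map_mul, map_pow, map_inv, FreeGroup.lift_apply_of, fgen, if_true, if_false,
    Bool.false_eq_true, ite_false, ite_true]
  have e1 : (A * T) ^ 2 = 1 := by rw [hAT, sq, JJ]
  have e2 : (T * A) ^ 2 = 1 := by
    have h : T * A * (T * A) = T * ((A * T) * (A * T)) * T⁻¹ := by
      simp [mul_assoc]
    rw [sq, h, hAT, JJ, mul_one, mul_inv_cancel]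
  rw [e1, e2, inv_one, mul_one]

private noncomputable def φ : PresentedGroup rels →* Equiv.Perm V :=
  PresentedGroup.toGroup hrel

private noncomputable def gfun : Fin 2 → PresentedGroup rels :=
  ![PresentedGroup.of false,
    (PresentedGroup.of true * PresentedGroup.of false) * PresentedGroup.of false *
      (PresentedGroup.of true * PresentedGroup.of false)⁻¹]

private noncomputable def afun : Fin 2 → Equiv.Perm V := ![T, S]

private lemma hcomp : FreeGroup.lift afun = φ.comp (FreeGroup.lift gfun) := by
  apply FreeGroup.ext_hom
  intro i
  fin_cases i
  · simp [afun, gfun, φ, PresentedGroup.toGroup.of, fgen]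
  · have : A * T = J := hAT
    simp [afun, gfun, φ, PresentedGroup.toGroup.of, fgen, map_mul, map_inv, ← this,
      ← JTJ, mul_assoc]

private noncomputable def X : Fin 2 → Set V :=
  ![{v | v.1.1 = 0 ∨ (0 < v.1.1 * v.1.2 ∧ v.1.1 ^ 2 < v.1.2 ^ 2)},
    {v | v.1.2 = 0 ∨ (0 < v.1.1 * v.1.2 ∧ v.1.2 ^ 2 < v.1.1 ^ 2)}]

private noncomputable def Y : Fin 2 → Set V :=
  ![{v | v.1.1 * v.1.2 < 0 ∧ v.1.1 ^ 2 < v.1.2 ^ 2},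
    {v | v.1.1 * v.1.2 < 0 ∧ v.1.2 ^ 2 < v.1.1 ^ 2}]

private lemma vne (v : V) : ¬((v : ℝ × ℝ).1 = 0 ∧ (v : ℝ × ℝ).2 = 0) := by
  rintro ⟨h1, h2⟩
  exact v.2 (Prod.ext h1 h2)

private lemma hXne : ∀ i, (X i).Nonempty := by
  intro i
  fin_cases i
  · exact ⟨⟨(0, 1), by simp [Prod.ext_iff]⟩, Or.inl rfl⟩
  · exact ⟨⟨(1, 0), by simp [Prod.ext_iff]⟩, Or.inl rfl⟩

private lemma dXX : Disjoint (X 0) (X 1) := by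
  rw [Set.disjoint_left]
  intro v hv hv'
  simp only [X, Matrix.cons_val_zero, Matrix.cons_val_one, Matrix.head_cons,
    Set.mem_setOf_eq] at hv hv'
  rcases hv with h | ⟨h1, h2⟩ <;> rcases hv' with h' | ⟨h1', h2'⟩
  · exact vne v ⟨h, h'⟩
  · rw [h, zero_mul] at h1'; linarith
  · rw [h', mul_zero] at h1; linarith
  · linarith

private lemma hXd : Pairwise (Function.onFun Disjoint X) := by
  intro i j hij
  fin_cases i <;> fin_cases j <;> simp_all
  · exact dXX
  · exact dXX.symm

private lemma dYY : Disjoint (Y 0) (Y 1) := by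
  rw [Set.disjoint_left]
  rintro v ⟨h1, h2⟩ ⟨h1', h2'⟩
  linarith

private lemma hYd : Pairwise (Function.onFun Disjoint Y) := by
  intro i j hij
  fin_cases i <;> fin_cases j <;> simp_all
  · exact dYY
  · exact dYY.symm

private lemma hXYd : ∀ i j, Disjoint (X i) (Y j) := by
  intro i j
  rw [Set.disjoint_left]
  intro v hv hv'
  fin_cases i <;> fin_cases j <;>
  · simp only [X, Y, Matrix.cons_val_zero, Matrix.cons_val_one, Matrix.head_cons,
      Set.mem_setOf_eq] at hv hv'
    obtain ⟨h1', h2'⟩ := hv'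
    rcases hv with h | ⟨h1, h2⟩
    · first
      | (rw [h, zero_mul] at h1'; linarith)
      | (rw [h, mul_zero] at h1'; linarith)
    · linarith

private lemma ne2 (w : V) : (((w : ℝ × ℝ).1, (w : ℝ × ℝ).2 - 3 * (w : ℝ × ℝ).1) : ℝ × ℝ) ≠ 0 := by
  intro h
  rw [Prod.ext_iff] at h
  simp only [Prod.fst_zero, Prod.snd_zero] at h
  exact vne w ⟨h.1, by have := h.2; rw [h.1] at this; linarith⟩

private lemma ne3 (w : V) : (((w : ℝ × ℝ).1 - 3 * (w : ℝ × ℝ).2, (w : ℝ × ℝ).2) : ℝ × ℝ) ≠ 0 := by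
  intro h
  rw [Prod.ext_iff] at h
  simp only [Prod.fst_zero, Prod.snd_zero] at h
  exact vne w ⟨by have := h.1; rw [h.2] at this; linarith, h.2⟩

private lemma Tinv_apply (w : V) :
    T⁻¹ w = ⟨((w : ℝ × ℝ).1, (w : ℝ × ℝ).2 - 3 * (w : ℝ × ℝ).1), ne2 w⟩ := by
  rw [Equiv.Perm.inv_def, Equiv.symm_apply_eq]
  apply Subtype.ext
  simp [T, Equiv.Perm.subtypePerm_apply, tE]

private lemma Sinv_apply (w : V) :
    S⁻¹ w = ⟨((w : ℝ × ℝ).1 - 3 * (w : ℝ × ℝ).2, (w : ℝ × ℝ).2), ne3 w⟩ := by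
  rw [Equiv.Perm.inv_def, Equiv.symm_apply_eq]
  apply Subtype.ext
  simp [S, Equiv.Perm.subtypePerm_apply, sE]

private lemma hX : ∀ i, afun i • (Y i)ᶜ ⊆ X i := by
  rw [Fin.forall_fin_two]
  constructor
  · intro v hv
    rw [Set.mem_smul_set] at hv
    obtain ⟨w, hw, rfl⟩ := hv
    obtain ⟨⟨x, y⟩, hvne⟩ := w
    simp only [Y, Matrix.cons_val_zero, Set.mem_compl_iff, Set.mem_setOf_eq, not_and,
      not_lt] at hw
    simp only [X, afun, Matrix.cons_val_zero, Set.mem_setOf_eq, Equiv.Perm.smul_def, T,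
      Equiv.Perm.subtypePerm_apply, tE, Equiv.coe_fn_mk]
    by_cases hx : x = 0
    · exact Or.inl hx
    · right
      have hx2 : 0 < x ^ 2 := by positivity
      rcases lt_or_ge (x * y) 0 with hs | hs
      · have h2 := hw hs
        constructor <;> nlinarith [sq_nonneg (x + y), sq_nonneg (x - y)]
      · constructor <;> nlinarith [sq_nonneg (x + y), sq_nonneg (x - y), sq_nonneg y]
  · intro v hv
    rw [Set.mem_smul_set] at hv
    obtain ⟨w, hw, rfl⟩ := hv
    obtain ⟨⟨x, y⟩, hvne⟩ := w
    simp only [Y, Matrix.cons_val_one, Matrix.cons_val_zero, Matrix.head_cons, Set.mem_compl_iff,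
      Set.mem_setOf_eq, not_and, not_lt] at hw
    simp only [X, afun, Matrix.cons_val_one, Matrix.cons_val_zero, Matrix.head_cons, Set.mem_setOf_eq,
      Equiv.Perm.smul_def, S, Equiv.Perm.subtypePerm_apply, sE, Equiv.coe_fn_mk]
    by_cases hy : y = 0
    · exact Or.inl hy
    · right
      have hy2 : 0 < y ^ 2 := by positivity
      rcases lt_or_ge (x * y) 0 with hs | hs
      · have h2 := hw hs
        constructor <;> nlinarith [sq_nonneg (x + y), sq_nonneg (x - y)]
      · constructor <;> nlinarith [sq_nonneg (x + y), sq_nonneg (x - y), sq_nonneg x]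

private lemma hY : ∀ i, afun⁻¹ i • (X i)ᶜ ⊆ Y i := by
  rw [Fin.forall_fin_two]
  constructor
  · intro v hv
    rw [Set.mem_smul_set] at hv
    obtain ⟨w, hw, rfl⟩ := hv
    simp only [Pi.inv_apply, afun, Matrix.cons_val_zero]
    rw [Equiv.Perm.smul_def, Tinv_apply]
    obtain ⟨⟨x, y⟩, hvne⟩ := w
    simp only [X, Matrix.cons_val_zero, Set.mem_compl_iff, Set.mem_setOf_eq, not_or,
      not_and, not_lt] at hw
    simp only [Y, Matrix.cons_val_zero, Set.mem_setOf_eq]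
    obtain ⟨hx, hw2⟩ := hw
    have hx2 : 0 < x ^ 2 := by positivity
    rcases lt_or_ge (0:ℝ) (x * y) with hs | hs
    · have h2 := hw2 hs
      constructor <;> nlinarith [sq_nonneg (x + y), sq_nonneg (x - y)]
    · constructor <;> nlinarith [sq_nonneg (x + y), sq_nonneg (x - y), sq_nonneg y]
  · intro v hv
    rw [Set.mem_smul_set] at hv
    obtain ⟨w, hw, rfl⟩ := hv
    simp only [Pi.inv_apply, afun, Matrix.cons_val_one, Matrix.cons_val_zero, Matrix.head_cons]
    rw [Equiv.Perm.smul_def, Sinv_apply]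
    obtain ⟨⟨x, y⟩, hvne⟩ := w
    simp only [X, Matrix.cons_val_one, Matrix.cons_val_zero, Matrix.head_cons, Set.mem_compl_iff,
      Set.mem_setOf_eq, not_or, not_and, not_lt] at hw
    simp only [Y, Matrix.cons_val_one, Matrix.cons_val_zero, Matrix.head_cons, Set.mem_setOf_eq]
    obtain ⟨hy, hw2⟩ := hw
    have hy2 : 0 < y ^ 2 := by positivity
    rcases lt_or_ge (0:ℝ) (x * y) with hs | hs
    · have h2 := hw2 hs
      constructor <;> nlinarith [sq_nonneg (x + y), sq_nonneg (x - y)]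
    · constructor <;> nlinarith [sq_nonneg (x + y), sq_nonneg (x - y), sq_nonneg x]

/-- The group `⟨a, b | (ab)² = (ba)²⟩` contains a free subgroup of rank 2. -/
theorem stmt_4 :
    ∃ g : FreeGroup (Fin 2) →*
        PresentedGroup
          ({(FreeGroup.of true * FreeGroup.of false) ^ 2 *
              ((FreeGroup.of false * FreeGroup.of true) ^ 2)⁻¹} : Set (FreeGroup Bool)),
      Function.Injective g := by
  refine ⟨FreeGroup.lift gfun, ?_⟩
  have h := FreeGroup.injective_lift_of_ping_pong afun X Y hXne hXd hYd hXYd hX hY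
  rw [hcomp, MonoidHom.coe_comp] at h
  exact h.of_comp
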